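/- arXiv:2106.07743 — 4 statements merged into one kernel-verified Lean document; each statement's English description precedes it below -/
import Mathlib

section
/- Let A : X → X* be a bounded linear operator admitting two factorizations A = Q*Q and A = S*TS, where S : X → V, T : V → V and Q : X → H are bounded linear operators. If T is coercive on Range(S), then Range(Q*) = Range(S*). -/
open Complex InnerProductSpace Filter Topology ENNReal TopologicalSpace

noncomputable section

local notation "⟪" x ", " y "⟫" => @inner ℂ _ _ x y

/-- `X*`: the continuous dual of a complex Hilbert space `X`, modeled as the space of
continuous conjugate-linear functionals, so that the dual pairing
`⟨x, ℓ⟩_{X×X*} := conj (ℓ x)` is sesquilinear (linear in `x`, conjugate-linear in `ℓ`). -/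
abbrev ADual (X : Type*) [NormedAddCommGroup X] [InnerProductSpace ℂ X] := X →L⋆[ℂ] ℂ

section defs
variable {X : Type*} [NormedAddCommGroup X] [InnerProductSpace ℂ X]

/-- The sesquilinear dual pairing `⟨x, ℓ⟩_{X×X*}`. -/
def dpair (x : X) (ℓ : ADual X) : ℂ := starRingEnd ℂ (ℓ x)

variable [CompleteSpace X]

/-- `J : X* → X`, the Riesz isometry, determined by `(x, Jℓ)_X = ⟨x, ℓ⟩_{X×X*}`
(with the paper's inner product, linear in the first slot; in Mathlib's convention
this reads `⟪Jℓ, x⟫ = conj (ℓ x)` for all `x`). -/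
def rieszJ (ℓ : ADual X) : X :=
  (InnerProductSpace.toDual ℂ X).symm
    { toFun := fun x => starRingEnd ℂ (ℓ x)
      map_add' := fun x y => by simp
      map_smul' := fun c x => by simp [mul_comm]
      cont := continuous_star.comp ℓ.continuous }

/-- A bounded operator `A : X → X*` is positive if `⟨x, Ax⟩_{X×X*} > 0`
(i.e. it is a positive real number) for every `x ≠ 0`. -/
def IsPositiveOp (A : X →L[ℂ] ADual X) : Prop :=
  ∀ x : X, x ≠ 0 → 0 < (dpair x (A x)).re ∧ (dpair x (A x)).im = 0

/-- Spectral data `{λ_n; x_n; ℓ_n}` of a positive compact operator `A : X → X*`: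
a nonincreasing sequence `λ_n > 0` tending to `0`, an orthonormal basis `x_n` of `X`
of eigenvectors of `JA` with `(JA)x_n = λ_n x_n`, and the dual basis `ℓ_n = J⁻¹x_n`. -/
structure SpectralData (A : X →L[ℂ] ADual X) (lam : ℕ → ℝ) (e : ℕ → X)
    (l : ℕ → ADual X) : Prop where
  pos : ∀ n, 0 < lam n
  anti : Antitone lam
  tendsto_zero : Tendsto lam atTop (𝓝 0)
  orthonormal : Orthonormal ℂ e
  complete : (Submodule.span ℂ (Set.range e)).topologicalClosure = ⊤
  eig : ∀ n, rieszJ (A (e n)) = (lam n : ℂ) • e n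
  dual_basis : ∀ n, rieszJ (l n) = e n

/-- A family of filter functions `f_α : (0, λ₁] → [0, ∞)`, `α > 0`, with
`f_α(t) → 1` as `α → 0` for every `t ∈ (0, λ₁]` and `f_α(t) ≤ C_reg`. -/
def IsFilterFamily (lam : ℕ → ℝ) (Creg : ℝ) (f : ℝ → ℝ → ℝ) : Prop :=
  0 < Creg ∧
    (∀ t ∈ Set.Ioc (0 : ℝ) (lam 0), Tendsto (fun α => f α t) (𝓝[>] (0 : ℝ)) (𝓝 1)) ∧
    (∀ α > (0 : ℝ), ∀ t ∈ Set.Ioc (0 : ℝ) (lam 0), 0 ≤ f α t ∧ f α t ≤ Creg)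

/-- `x_α`, the regularized solution of `Ax = ℓ` for the filter family `f`:
`x_α = Σ_n (f_α(λ_n)/λ_n) conj(⟨x_n, ℓ⟩) x_n`. -/
def IsRegSolution (lam : ℕ → ℝ) (e : ℕ → X) (f : ℝ → ℝ → ℝ) (ℓ : ADual X)
    (xa : ℝ → X) : Prop :=
  ∀ α : ℝ, 0 < α →
    HasSum
      (fun n => (((f α (lam n) / lam n : ℝ) : ℂ) * starRingEnd ℂ (dpair (e n) ℓ)) • e n)
      (xa α)

end defs

section adj
variable {X V : Type*} [NormedAddCommGroup X] [InnerProductSpace ℂ X] [CompleteSpace X]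
  [NormedAddCommGroup V] [InnerProductSpace ℂ V] [CompleteSpace V]

/-- The adjoint `S* : V → X*` of a bounded operator `S : X → V`, determined by
`(Sx, v)_V = ⟨x, S*v⟩_{X×X*}` for all `x ∈ X`, `v ∈ V`. -/
def hadj (S : X →L[ℂ] V) : V →L[ℂ] ADual X :=
  LinearMap.mkContinuous
    { toFun := fun v =>
        { toFun := fun x => ⟪S x, v⟫
          map_add' := fun x y => by simp [inner_add_left]
          map_smul' := fun c x => by simp [inner_smul_left, mul_comm]
          cont := (S.continuous.inner continuous_const) }
      map_add' := fun v w => by ext x; simp [inner_add_right]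
      map_smul' := fun c v => by ext x; simp [inner_smul_right] }
    ‖S‖
    (fun v => by
      apply ContinuousLinearMap.opNorm_le_bound
      · positivity
      · intro x
        calc ‖⟪S x, v⟫‖ ≤ ‖S x‖ * ‖v‖ := norm_inner_le_norm _ _
          _ ≤ (‖S‖ * ‖x‖) * ‖v‖ := by gcongr; exact S.le_opNorm x
          _ = ‖S‖ * ‖v‖ * ‖x‖ := by ring)

/-- A bounded operator `T : V → V` is coercive on the range of `S : X → V` if there is
`β > 0` with `β‖Sx‖² ≤ (Sx, TSx)_V` for all `x ∈ X`. -/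
def CoerciveOnRange (S : X →L[ℂ] V) (T : V →L[ℂ] V) : Prop :=
  ∃ β : ℝ, 0 < β ∧ ∀ x : X, β * ‖S x‖ ^ 2 ≤ (⟪T (S x), S x⟫).re

end adj

/-!
Since `A = Q*Q = S*TS`, evaluating `A x` at `x` gives `‖Qx‖² = Re (TSx, Sx)`, so coercivity and
boundedness of `T` make `‖Sx‖` and `‖Qx‖` equivalent. Douglas' lemma turns `‖Sx‖ ≤ C‖Qx‖` into a
factorization `S = DQ` with `D : H → V` bounded (`D` is `Qx ↦ Sx`, extended by continuity to the
closure of `Range Q` and by zero on its orthogonal complement), whence `S* = Q*D*` and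
`Range S* ⊆ Range Q*`; the reverse inclusion is symmetric.
-/

theorem LinearMap.denseRange_codRestrict_topologicalClosure {R M N : Type*} [Ring R]
    [AddCommGroup M] [Module R M] [AddCommGroup N] [Module R N] [TopologicalSpace N]
    [IsTopologicalAddGroup N] [ContinuousConstSMul R N] (f : M →ₗ[R] N) :
    DenseRange (f.codRestrict (LinearMap.range f).topologicalClosure
      fun x => (LinearMap.range f).le_topologicalClosure (LinearMap.mem_range_self f x)) := by
  rw [DenseRange, Subtype.dense_iff, ← Set.range_comp]
  exact (Submodule.topologicalClosure_coe _).subset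

section Douglas
variable {𝕜 E V H : Type*} [RCLike 𝕜] [NormedAddCommGroup E] [NormedSpace 𝕜 E]
  [NormedAddCommGroup V] [NormedSpace 𝕜 V] [CompleteSpace V]
  [NormedAddCommGroup H] [InnerProductSpace 𝕜 H] [CompleteSpace H]

theorem ContinuousLinearMap.exists_comp_eq_of_norm_le (S : E →L[𝕜] V) (Q : E →L[𝕜] H)
    (hSQ : ∃ C, ∀ x, ‖S x‖ ≤ C * ‖Q x‖) : ∃ D : H →L[𝕜] V, D.comp Q = S := by
  let K := (LinearMap.range (Q : E →ₗ[𝕜] H)).topologicalClosure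
  let e : E →ₗ[𝕜] K := (Q : E →ₗ[𝕜] H).codRestrict K
    fun x => (LinearMap.range _).le_topologicalClosure (LinearMap.mem_range_self _ x)
  refine ⟨((S : E →ₗ[𝕜] V).extendOfNorm e).comp K.orthogonalProjectionOnto, ?_⟩
  ext x
  have hproj : K.orthogonalProjectionOnto (Q x) = e x :=
    K.orthogonalProjectionOnto_mem_subspace_eq_self (e x)
  rw [ContinuousLinearMap.comp_apply, ContinuousLinearMap.comp_apply, hproj,
    LinearMap.extendOfNorm_eq (Q : E →ₗ[𝕜] H).denseRange_codRestrict_topologicalClosure hSQ]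
  rfl

end Douglas

theorem ContinuousLinearMap.re_inner_apply_self_le {𝕜 E : Type*} [RCLike 𝕜]
    [NormedAddCommGroup E] [InnerProductSpace 𝕜 E] (T : E →L[𝕜] E) (x : E) :
    RCLike.re (inner 𝕜 (T x) x) ≤ ‖T‖ * ‖x‖ ^ 2 :=
  calc RCLike.re (inner 𝕜 (T x) x) ≤ ‖T x‖ * ‖x‖ := re_inner_le_norm _ _
    _ ≤ ‖T‖ * ‖x‖ * ‖x‖ := by gcongr; exact T.le_opNorm x
    _ = ‖T‖ * ‖x‖ ^ 2 := by ring

section hadj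
variable {X V H : Type*} [NormedAddCommGroup X] [InnerProductSpace ℂ X]
  [NormedAddCommGroup V] [InnerProductSpace ℂ V] [NormedAddCommGroup H] [InnerProductSpace ℂ H]

theorem hadj_comp [CompleteSpace V] [CompleteSpace H] (D : H →L[ℂ] V) (Q : X →L[ℂ] H) :
    hadj (D.comp Q) = (hadj Q).comp (ContinuousLinearMap.adjoint D) := by
  ext v x
  exact (ContinuousLinearMap.adjoint_inner_right D (Q x) v).symm

theorem range_hadj_subset_of_norm_sq_le [CompleteSpace V] [CompleteSpace H]
    (S : X →L[ℂ] V) (Q : X →L[ℂ] H) {C : ℝ}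
    (hSQ : ∀ x, ‖S x‖ ^ 2 ≤ C * ‖Q x‖ ^ 2) :
    Set.range (hadj S) ⊆ Set.range (hadj Q) := by
  have hnorm : ∀ x, ‖S x‖ ≤ √C * ‖Q x‖ := fun x =>
    calc ‖S x‖ = √(‖S x‖ ^ 2) := (Real.sqrt_sq (norm_nonneg _)).symm
      _ ≤ √(C * ‖Q x‖ ^ 2) := Real.sqrt_le_sqrt (hSQ x)
      _ = √C * ‖Q x‖ := by rw [Real.sqrt_mul' _ (sq_nonneg _), Real.sqrt_sq (norm_nonneg _)]
  obtain ⟨D, rfl⟩ := S.exists_comp_eq_of_norm_le Q ⟨√C, hnorm⟩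
  rw [hadj_comp, ContinuousLinearMap.coe_comp]
  exact Set.range_comp_subset_range _ _

theorem norm_sq_eq_re_inner_of_hadj_comp_eq {S : X →L[ℂ] V} {T : V →L[ℂ] V} {Q : X →L[ℂ] H}
    (h : (hadj Q).comp Q = (hadj S).comp (T.comp S)) (x : X) :
    ‖Q x‖ ^ 2 = (⟪T (S x), S x⟫).re := by
  have hx : ⟪Q x, Q x⟫ = ⟪S x, T (S x)⟫ := congrArg (fun B : X →L[ℂ] ADual X => B x x) h
  rw [← inner_self_eq_norm_sq (𝕜 := ℂ), RCLike.re_eq_complex_re, hx]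
  exact inner_re_symm (𝕜 := ℂ) _ _

end hadj

theorem range_adjQ_eq_range_adjS_general
    {X V H : Type*}
    [NormedAddCommGroup X] [InnerProductSpace ℂ X]
    [NormedAddCommGroup V] [InnerProductSpace ℂ V] [CompleteSpace V]
    [NormedAddCommGroup H] [InnerProductSpace ℂ H] [CompleteSpace H]
    (A : X →L[ℂ] ADual X) (S : X →L[ℂ] V) (T : V →L[ℂ] V) (Q : X →L[ℂ] H)
    (hAQ : A = (hadj Q).comp Q)
    (hAS : A = (hadj S).comp (T.comp S))
    (hT : CoerciveOnRange S T) :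
    Set.range ⇑(hadj Q) = Set.range ⇑(hadj S) := by
  obtain ⟨β, hβ, hcoer⟩ := hT
  have hQS := norm_sq_eq_re_inner_of_hadj_comp_eq (hAQ.symm.trans hAS)
  refine (range_hadj_subset_of_norm_sq_le Q S (C := ‖T‖) fun x => ?_).antisymm
    (range_hadj_subset_of_norm_sq_le S Q (C := β⁻¹) fun x => ?_)
  · rw [hQS]
    exact T.re_inner_apply_self_le (S x)
  · rw [hQS, ← div_eq_inv_mul, le_div_iff₀' hβ]
    exact hcoer x

/-- If `A = Q*Q = S*TS` with `T` coercive on `Range(S)`, then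
`Range(Q*) = Range(S*)`. -/
theorem range_adjQ_eq_range_adjS
    {X V H : Type*}
    [NormedAddCommGroup X] [InnerProductSpace ℂ X] [CompleteSpace X]
    [NormedAddCommGroup V] [InnerProductSpace ℂ V] [CompleteSpace V]
    [NormedAddCommGroup H] [InnerProductSpace ℂ H] [CompleteSpace H]
    (A : X →L[ℂ] ADual X) (S : X →L[ℂ] V) (T : V →L[ℂ] V) (Q : X →L[ℂ] H)
    (hAQ : A = (hadj Q).comp Q)
    (hAS : A = (hadj S).comp (T.comp S))
    (hT : CoerciveOnRange S T) :
    Set.range ⇑(hadj Q) = Set.range ⇑(hadj S) :=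
  range_adjQ_eq_range_adjS_general A S T Q hAQ hAS hT
end
end

section
/- Let S : X → V and Q : X → H be bounded linear operators between Hilbert spaces and suppose there exist constants 0 < c₁ ≤ c₂ such that c₁‖Sx‖_V ≤ ‖Qx‖_H ≤ c₂‖Sx‖_V for every x ∈ X. Then Range(S*) = Range(Q*), where S* : V → X* and Q* : H → X* are the adjoint operators into the dual space of X. -/
open Complex InnerProductSpace Filter Topology ENNReal TopologicalSpace

noncomputable section

local notation "⟪" x ", " y "⟫" => @inner ℂ _ _ x y

/- A functional `ℓ` lies in the range of `S*` exactly when `‖ℓ x‖ ≤ C ‖S x‖` for some `C`: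
such an `ℓ` factors through a bounded functional on `range S`, which extends to `V` by
Hahn–Banach and is then represented by a vector of `V` (Riesz). Norm equivalence of `S` and `Q`
makes the two bounds equivalent. -/

theorem LinearMap.exists_strongDual_apply_eq_of_norm_le {𝕜 E F : Type*} [RCLike 𝕜]
    [AddCommGroup E] [Module 𝕜 E] [NormedAddCommGroup F] [NormedSpace 𝕜 F]
    (S : E →ₗ[𝕜] F) (φ : E →ₗ[𝕜] 𝕜) (C : ℝ) (hφ : ∀ x, ‖φ x‖ ≤ C * ‖S x‖) :
    ∃ g : StrongDual 𝕜 F, ∀ x, g (S x) = φ x := by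
  have hker : LinearMap.ker S ≤ LinearMap.ker φ := fun x hx ↦ by
    simpa [show S x = 0 from hx] using hφ x
  set f : LinearMap.range S →ₗ[𝕜] 𝕜 :=
    (LinearMap.ker S).liftQ φ hker ∘ₗ S.quotKerEquivRange.symm.toLinearMap
  have hf : ∀ x, f (S.rangeRestrict x) = φ x := fun x ↦ by
    change (LinearMap.ker S).liftQ φ hker (S.quotKerEquivRange.symm ⟨S x, _⟩) = φ x
    rw [LinearMap.quotKerEquivRange_symm_apply_image]
    rfl
  have hf_le : ∀ y, ‖f y‖ ≤ C * ‖y‖ := by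
    rintro ⟨_, x, rfl⟩
    exact (congrArg norm (hf x)).trans_le (hφ x)
  obtain ⟨g, hg, -⟩ := exists_extension_norm_eq _ (f.mkContinuous C hf_le)
  exact ⟨g, fun x ↦ (hg (S.rangeRestrict x)).trans (hf x)⟩

theorem LinearMap.exists_inner_apply_eq_of_norm_le {𝕜 E V : Type*} [RCLike 𝕜]
    [AddCommGroup E] [Module 𝕜 E] [NormedAddCommGroup V] [InnerProductSpace 𝕜 V]
    [CompleteSpace V] (S : E →ₗ[𝕜] V) (φ : E →ₗ[𝕜] 𝕜) (C : ℝ)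
    (hφ : ∀ x, ‖φ x‖ ≤ C * ‖S x‖) :
    ∃ v : V, ∀ x, inner 𝕜 v (S x) = φ x := by
  obtain ⟨g, hg⟩ := S.exists_strongDual_apply_eq_of_norm_le φ C hφ
  exact ⟨(toDual 𝕜 V).symm g, fun x ↦ by rw [toDual_symm_apply, hg]⟩

section hadj

variable {X V H : Type*} [NormedAddCommGroup X] [InnerProductSpace ℂ X]
  [NormedAddCommGroup V] [InnerProductSpace ℂ V] [NormedAddCommGroup H] [InnerProductSpace ℂ H]

theorem hadj_apply (S : X →L[ℂ] V) (v : V) (x : X) : hadj S v x = ⟪S x, v⟫ := rfl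

theorem norm_hadj_apply_le (S : X →L[ℂ] V) (v : V) (x : X) :
    ‖hadj S v x‖ ≤ ‖v‖ * ‖S x‖ := by
  rw [hadj_apply, mul_comm]
  exact norm_inner_le_norm _ _

theorem mem_range_hadj_of_norm_le [CompleteSpace V] (S : X →L[ℂ] V) (ℓ : ADual X) (C : ℝ)
    (hℓ : ∀ x, ‖ℓ x‖ ≤ C * ‖S x‖) : ℓ ∈ Set.range (hadj S) := by
  let φ : X →ₗ[ℂ] ℂ := (starLinearEquiv ℂ).toLinearMap.comp ℓ.toLinearMap
  obtain ⟨v, hv⟩ := (S : X →ₗ[ℂ] V).exists_inner_apply_eq_of_norm_le φ C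
    fun x ↦ by simpa [φ] using hℓ x
  refine ⟨v, ContinuousLinearMap.ext fun x ↦ ?_⟩
  rw [hadj_apply, ← inner_conj_symm]
  simpa [φ] using congrArg (starRingEnd ℂ) (hv x)

theorem range_hadj_subset_of_norm_le [CompleteSpace H] (S : X →L[ℂ] V) (Q : X →L[ℂ] H) (C : ℝ)
    (hSQ : ∀ x, ‖S x‖ ≤ C * ‖Q x‖) : Set.range (hadj S) ⊆ Set.range (hadj Q) := by
  rintro _ ⟨v, rfl⟩
  refine mem_range_hadj_of_norm_le Q _ (‖v‖ * C) fun x ↦ ?_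
  calc ‖hadj S v x‖ ≤ ‖v‖ * ‖S x‖ := norm_hadj_apply_le S v x
    _ ≤ ‖v‖ * (C * ‖Q x‖) := by gcongr; exact hSQ x
    _ = ‖v‖ * C * ‖Q x‖ := (mul_assoc _ _ _).symm

end hadj

theorem range_adjS_eq_range_adjQ_of_norm_equiv_general
    {X V H : Type*}
    [NormedAddCommGroup X] [InnerProductSpace ℂ X]
    [NormedAddCommGroup V] [InnerProductSpace ℂ V] [CompleteSpace V]
    [NormedAddCommGroup H] [InnerProductSpace ℂ H] [CompleteSpace H]
    (S : X →L[ℂ] V) (Q : X →L[ℂ] H) (c₁ c₂ : ℝ)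
    (hc₁ : 0 < c₁)
    (hbound : ∀ x : X, c₁ * ‖S x‖ ≤ ‖Q x‖ ∧ ‖Q x‖ ≤ c₂ * ‖S x‖) :
    Set.range ⇑(hadj S) = Set.range ⇑(hadj Q) := by
  have hSQ : ∀ x, ‖S x‖ ≤ c₁⁻¹ * ‖Q x‖ := fun x ↦ by
    rw [inv_mul_eq_div, le_div_iff₀' hc₁]
    exact (hbound x).1
  exact (range_hadj_subset_of_norm_le S Q c₁⁻¹ hSQ).antisymm
    (range_hadj_subset_of_norm_le Q S c₂ fun x ↦ (hbound x).2)

/-- If `c₁‖Sx‖ ≤ ‖Qx‖ ≤ c₂‖Sx‖` with `0 < c₁ ≤ c₂`, then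
`Range(S*) = Range(Q*)`. -/
theorem range_adjS_eq_range_adjQ_of_norm_equiv
    {X V H : Type*}
    [NormedAddCommGroup X] [InnerProductSpace ℂ X] [CompleteSpace X]
    [NormedAddCommGroup V] [InnerProductSpace ℂ V] [CompleteSpace V]
    [NormedAddCommGroup H] [InnerProductSpace ℂ H] [CompleteSpace H]
    (S : X →L[ℂ] V) (Q : X →L[ℂ] H) (c₁ c₂ : ℝ)
    (hc₁ : 0 < c₁) (hc₁₂ : c₁ ≤ c₂)
    (hbound : ∀ x : X, c₁ * ‖S x‖ ≤ ‖Q x‖ ∧ ‖Q x‖ ≤ c₂ * ‖S x‖) :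
    Set.range ⇑(hadj S) = Set.range ⇑(hadj Q) :=
  range_adjS_eq_range_adjQ_of_norm_equiv_general S Q c₁ c₂ hc₁ hbound
end
end

section
/- Let X be a separable complex Hilbert space, A : X → X* a positive compact linear operator with spectral data {λ_n; x_n; ℓ_n}, {f_α}_{α>0} a family of filter functions with bound C_reg, ℓ ∈ X*, and x_α the regularized solution of Ax = ℓ. Then, as values in [0, ∞], Σ_n (1/λ_n) |⟨x_n, ℓ⟩_{X×X*}|² ≤ liminf_{α→0} ⟨x_α, Ax_α⟩_{X×X*} ≤ C_reg² Σ_n (1/λ_n) |⟨x_n, ℓ⟩_{X×X*}|². -/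
open Complex InnerProductSpace Filter Topology ENNReal TopologicalSpace

noncomputable section

local notation "⟪" x ", " y "⟫" => @inner ℂ _ _ x y

/-! Expanding `x_α` in the eigenbasis gives
`⟨x_α, A x_α⟩ = Σ_n f_α(λ_n)² |⟨x_n, ℓ⟩|² / λ_n`. The upper bound then holds termwise since
`0 ≤ f_α ≤ C_reg`, and the lower bound is Fatou's lemma for series, each term tending to
`|⟨x_n, ℓ⟩|² / λ_n` as `α → 0`. -/

lemma Orthonormal.inner_eq_of_hasSum {𝕜 E ι : Type*} [RCLike 𝕜] [NormedAddCommGroup E]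
    [InnerProductSpace 𝕜 E] {e : ι → E} (he : Orthonormal 𝕜 e) {c : ι → 𝕜} {x : E}
    (hx : HasSum (fun n => c n • e n) x) (i : ι) : inner 𝕜 (e i) x = c i := by
  refine ((innerSL 𝕜 (e i)).hasSum hx).unique (hasSum_single i fun n hn => ?_) |>.trans ?_
  · simp [he.inner_eq_zero (Ne.symm hn)]
  · simp [he.1 i]

section spectral
variable {X : Type*} [NormedAddCommGroup X] [InnerProductSpace ℂ X] [CompleteSpace X]

lemma apply_eq_inner_rieszJ (ℓ : ADual X) (y : X) : ℓ y = ⟪y, rieszJ ℓ⟫ := by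
  rw [← inner_conj_symm]
  simp [rieszJ, InnerProductSpace.toDual_symm_apply]

lemma hasSum_re_dpair_apply_self {ι : Type*} {A : X →L[ℂ] ADual X} {lam : ι → ℝ} {e : ι → X}
    (he : Orthonormal ℂ e) (heig : ∀ n, rieszJ (A (e n)) = (lam n : ℂ) • e n) {c : ι → ℂ}
    {x : X} (hx : HasSum (fun n => c n • e n) x) :
    HasSum (fun n => lam n * ‖c n‖ ^ 2) (dpair x (A x)).re := by
  have hAx : HasSum (fun n => c n * A (e n) x) (A x x) := by
    simpa using (ContinuousLinearMap.apply' ℂ (starRingEnd ℂ) x).hasSum (A.hasSum hx)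
  have hterm : ∀ n, c n * A (e n) x = ((lam n * ‖c n‖ ^ 2 : ℝ) : ℂ) := by
    intro n
    rw [apply_eq_inner_rieszJ, heig, inner_smul_right, ← inner_conj_symm,
      he.inner_eq_of_hasSum hx, mul_left_comm, Complex.mul_conj, Complex.normSq_eq_norm_sq]
    push_cast
    ring
  have hre := Complex.reCLM.hasSum hAx
  simp only [hterm, Complex.reCLM_apply, Complex.ofReal_re] at hre
  simpa [dpair] using hre

end spectral

lemma ENNReal.tsum_le_liminf_tsum {ι β : Type*} {L : Filter ι} [L.NeBot] {a : ι → β → ℝ≥0∞}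
    {w : β → ℝ≥0∞} (h : ∀ n, Tendsto (fun i => a i n) L (𝓝 (w n))) :
    ∑' n, w n ≤ liminf (fun i => ∑' n, a i n) L := by
  rw [ENNReal.tsum_eq_iSup_sum]
  refine iSup_le fun s => ?_
  calc ∑ n ∈ s, w n = liminf (fun i => ∑ n ∈ s, a i n) L :=
        (tendsto_finsetSum s fun n _ => h n).liminf_eq.symm
    _ ≤ _ := liminf_le_liminf (.of_forall fun i => ENNReal.sum_le_tsum s)

lemma liminf_ofReal_bounds_of_hasSum_sq_mul {ι β : Type*} {L : Filter ι} [L.NeBot]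
    {g : ι → β → ℝ} {w : β → ℝ} {q : ι → ℝ} {C : ℝ} (hw : ∀ n, 0 ≤ w n)
    (hg : ∀ n, Tendsto (fun i => g i n) L (𝓝 1))
    (hbd : ∀ᶠ i in L, ∀ n, 0 ≤ g i n ∧ g i n ≤ C)
    (hq : ∀ᶠ i in L, HasSum (fun n => g i n ^ 2 * w n) (q i)) :
    ∑' n, ENNReal.ofReal (w n) ≤ liminf (fun i => ENNReal.ofReal (q i)) L ∧
      liminf (fun i => ENNReal.ofReal (q i)) L ≤
        ENNReal.ofReal (C ^ 2) * ∑' n, ENNReal.ofReal (w n) := by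
  have hq' : (fun i => ENNReal.ofReal (q i)) =ᶠ[L]
      fun i => ∑' n, ENNReal.ofReal (g i n ^ 2 * w n) :=
    hq.mono fun i hi => by
      dsimp only
      rw [← hi.tsum_eq, ENNReal.ofReal_tsum_of_nonneg (fun n => by have := hw n; positivity)
        hi.summable]
  rw [liminf_congr hq']
  constructor
  · refine ENNReal.tsum_le_liminf_tsum fun n => ?_
    simpa using ENNReal.tendsto_ofReal (((hg n).pow 2).mul_const (w n))
  · refine liminf_le_of_frequently_le' (hbd.mono fun i hi => ?_).frequently
    rw [← ENNReal.tsum_mul_left]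
    refine ENNReal.tsum_le_tsum fun n => ?_
    rw [← ENNReal.ofReal_mul (sq_nonneg C)]
    exact ENNReal.ofReal_le_ofReal
      (mul_le_mul_of_nonneg_right (pow_le_pow_left₀ (hi n).1 (hi n).2 2) (hw n))

theorem liminf_bounds_regularized_general
    {X : Type*} [NormedAddCommGroup X] [InnerProductSpace ℂ X] [CompleteSpace X]
    (A : X →L[ℂ] ADual X)
    (lam : ℕ → ℝ) (e : ℕ → X) (l : ℕ → ADual X)
    (hspec : SpectralData A lam e l)
    (Creg : ℝ) (f : ℝ → ℝ → ℝ) (hf : IsFilterFamily lam Creg f)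
    (ℓ : ADual X) (xa : ℝ → X) (hxa : IsRegSolution lam e f ℓ xa) :
    (∑' n, ENNReal.ofReal ((1 / lam n) * ‖dpair (e n) ℓ‖ ^ 2)) ≤
        Filter.liminf (fun α => ENNReal.ofReal ((dpair (xa α) (A (xa α))).re))
          (𝓝[>] (0 : ℝ)) ∧
      Filter.liminf (fun α => ENNReal.ofReal ((dpair (xa α) (A (xa α))).re))
          (𝓝[>] (0 : ℝ)) ≤
        ENNReal.ofReal (Creg ^ 2) *
          ∑' n, ENNReal.ofReal ((1 / lam n) * ‖dpair (e n) ℓ‖ ^ 2) := by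
  obtain ⟨-, hlim, hbd⟩ := hf
  have hmem : ∀ n, lam n ∈ Set.Ioc 0 (lam 0) :=
    fun n => ⟨hspec.pos n, hspec.anti (Nat.zero_le n)⟩
  refine liminf_ofReal_bounds_of_hasSum_sq_mul (g := fun α n => f α (lam n))
    (fun n => by have := hspec.pos n; positivity) (fun n => hlim _ (hmem n))
    (eventually_nhdsWithin_of_forall fun α hα n => hbd α hα _ (hmem n))
    (eventually_nhdsWithin_of_forall fun α hα => ?_)
  convert hasSum_re_dpair_apply_self hspec.orthonormal hspec.eig (hxa α hα) using 2 with n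
  have := (hspec.pos n).ne'
  simp only [norm_mul, Complex.norm_real, RCLike.norm_conj, Real.norm_eq_abs, mul_pow, sq_abs]
  field_simp

/-- For a filter family with bound `C_reg` and the regularized solution
`x_α` of `Ax = ℓ`, as values in `[0, ∞]`:
`Σ_n (1/λ_n)|⟨x_n, ℓ⟩|² ≤ liminf_{α→0} ⟨x_α, Ax_α⟩ ≤ C_reg² Σ_n (1/λ_n)|⟨x_n, ℓ⟩|²`. -/
theorem liminf_bounds_regularized
    {X : Type*} [NormedAddCommGroup X] [InnerProductSpace ℂ X] [CompleteSpace X]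
    [SeparableSpace X]
    (A : X →L[ℂ] ADual X) (hpos : IsPositiveOp A) (hcpt : IsCompactOperator ⇑A)
    (lam : ℕ → ℝ) (e : ℕ → X) (l : ℕ → ADual X)
    (hspec : SpectralData A lam e l)
    (Creg : ℝ) (f : ℝ → ℝ → ℝ) (hf : IsFilterFamily lam Creg f)
    (ℓ : ADual X) (xa : ℝ → X) (hxa : IsRegSolution lam e f ℓ xa) :
    (∑' n, ENNReal.ofReal ((1 / lam n) * ‖dpair (e n) ℓ‖ ^ 2)) ≤
        Filter.liminf (fun α => ENNReal.ofReal ((dpair (xa α) (A (xa α))).re))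
          (𝓝[>] (0 : ℝ)) ∧
      Filter.liminf (fun α => ENNReal.ofReal ((dpair (xa α) (A (xa α))).re))
          (𝓝[>] (0 : ℝ)) ≤
        ENNReal.ofReal (Creg ^ 2) *
          ∑' n, ENNReal.ofReal ((1 / lam n) * ‖dpair (e n) ℓ‖ ^ 2) :=
  liminf_bounds_regularized_general A lam e l hspec Creg f hf ℓ xa hxa
end
end

section
/- Let X be a separable complex Hilbert space, A : X → X* a positive compact linear operator with spectral data {λ_n; x_n; ℓ_n}, ℓ ∈ X*, and α > 0. Then the functional J_α(ℓ; x) = α ⟨x, Ax⟩_{X×X*} + ‖Ax − ℓ‖²_{X*} has a unique minimizer over X, given by x_α = Σ_n (λ_n/(α λ_n + λ_n²)) conj(⟨x_n, ℓ⟩_{X×X*}) x_n. -/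
open Complex InnerProductSpace Filter Topology ENNReal TopologicalSpace

noncomputable section

local notation "⟪" x ", " y "⟫" => @inner ℂ _ _ x y

/-!
With `T = JA`, a positive self-adjoint operator on `X`, and `b = Jℓ`, the functional reads
`J_α(x) = α (Tx, x) + ‖Tx - b‖²`. If `x` solves the Euler equation `α x + T x = b`, the cross
term of the expansion around `x` vanishes and `J_α(x + h) = J_α(x) + α (Th, h) + ‖Th‖²`, which
exceeds `J_α(x)` for `h ≠ 0`. In the eigenbasis the Euler equation is solved coefficientwise by
`(α + λ_n)⁻¹ (b, x_n) = λ_n / (α λ_n + λ_n²) · conj ⟨x_n, ℓ⟩`, a square-summable sequence since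
`(α + λ_n)⁻¹ ≤ α⁻¹`.
-/

section GLSM
variable {𝕜 E : Type*} [RCLike 𝕜] [NormedAddCommGroup E] [InnerProductSpace 𝕜 E]

def glsmFunctional (T : E →L[𝕜] E) (b : E) (α : ℝ) (x : E) : ℝ :=
  α * RCLike.re (inner 𝕜 (T x) x) + ‖T x - b‖ ^ 2

variable {T : E →L[𝕜] E} {b x : E} {α : ℝ}

lemma glsmFunctional_add (hT : T.IsSymmetric) (hx : (α : 𝕜) • x + T x = b) (h : E) :
    glsmFunctional T b α (x + h) =
      glsmFunctional T b α x + (α * RCLike.re (inner 𝕜 (T h) h) + ‖T h‖ ^ 2) := by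
  have hres₀ : T x - b = -((α : 𝕜) • x) := by rw [← hx]; abel
  have hres : T (x + h) - b = (T x - b) + T h := by rw [map_add]; abel
  have hcross : RCLike.re (inner 𝕜 (T h) x) = RCLike.re (inner 𝕜 (T x) h) := by
    rw [hT.apply_clm h x, inner_re_symm]
  rw [glsmFunctional, glsmFunctional, hres, @norm_add_sq 𝕜, hres₀, inner_neg_left,
    inner_smul_left, RCLike.conj_ofReal, ← hT.apply_clm x h, map_add, inner_add_left,
    inner_add_right, inner_add_right]
  simp only [map_add, map_neg, RCLike.re_ofReal_mul, hcross]
  ring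

lemma glsmFunctional_le (hT : T.IsPositive) (hα : 0 ≤ α) (hx : (α : 𝕜) • x + T x = b)
    (z : E) : glsmFunctional T b α x ≤ glsmFunctional T b α z := by
  have hexp := glsmFunctional_add hT.isSymmetric hx (z - x)
  rw [add_sub_cancel] at hexp
  nlinarith [hT.re_inner_nonneg_left (z - x), sq_nonneg ‖T (z - x)‖]

lemma eq_of_glsmFunctional_le (hT : T.IsSymmetric)
    (hTpos : ∀ h ≠ 0, 0 < RCLike.re (inner 𝕜 (T h) h)) (hα : 0 ≤ α)
    (hx : (α : 𝕜) • x + T x = b) {z : E} (hz : glsmFunctional T b α z ≤ glsmFunctional T b α x) :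
    z = x := by
  by_contra hne
  have hre := hTpos (z - x) (sub_ne_zero.mpr hne)
  have hTh : T (z - x) ≠ 0 := fun h0 => by simp [h0] at hre
  have hexp := glsmFunctional_add hT hx (z - x)
  rw [add_sub_cancel] at hexp
  nlinarith [norm_pos_iff.mpr hTh, mul_nonneg hα hre.le]

end GLSM

section Riesz
variable {X : Type*} [NormedAddCommGroup X] [InnerProductSpace ℂ X]

lemma conj_dpair (x : X) (φ : ADual X) : starRingEnd ℂ (dpair x φ) = φ x :=
  Complex.conj_conj _

variable [CompleteSpace X]

lemma rieszJ_inner (φ : ADual X) (x : X) : ⟪rieszJ φ, x⟫ = dpair x φ := by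
  rw [rieszJ, InnerProductSpace.toDual_symm_apply]
  rfl

lemma inner_rieszJ (x : X) (φ : ADual X) : ⟪x, rieszJ φ⟫ = φ x := by
  rw [← inner_conj_symm, rieszJ_inner, dpair, Complex.conj_conj]

lemma norm_rieszJ_le (φ : ADual X) : ‖rieszJ φ‖ ≤ ‖φ‖ := by
  rw [rieszJ, LinearIsometryEquiv.norm_map]
  refine ContinuousLinearMap.opNorm_le_bound _ (norm_nonneg φ) fun x => ?_
  simpa using φ.le_opNorm x

variable (X) in
/-- `J` is complex-linear (not conjugate-linear) because `X*` consists of conjugate-linear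
functionals. -/
def rieszJL : ADual X →L[ℂ] X :=
  LinearMap.mkContinuous
    { toFun := rieszJ
      map_add' := fun φ ψ => ext_inner_left ℂ fun v => by
        simp only [inner_rieszJ, inner_add_right, add_apply]
      map_smul' := fun c φ => ext_inner_left ℂ fun v => by
        simp only [inner_rieszJ, inner_smul_right, smul_apply, smul_eq_mul, RingHom.id_apply] }
    1 fun φ => by simpa using norm_rieszJ_le φ

@[simp]
lemma rieszJL_apply (φ : ADual X) : rieszJL X φ = rieszJ φ := rfl

lemma IsPositiveOp.isPositive {A : X →L[ℂ] ADual X} (hA : IsPositiveOp A) :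
    (rieszJL X ∘L A).IsPositive := by
  rw [← ContinuousLinearMap.isPositive_toLinearMap_iff, LinearMap.isPositive_iff_complex]
  intro x
  rcases eq_or_ne x 0 with rfl | hx
  · simp
  · obtain ⟨hre, him⟩ := hA x hx
    simp only [ContinuousLinearMap.coe_coe, ContinuousLinearMap.comp_apply, rieszJL_apply,
      rieszJ_inner, RCLike.re_to_complex]
    exact ⟨Complex.ext (by simp) (by simp [him]), hre.le⟩

lemma IsPositiveOp.re_inner_pos {A : X →L[ℂ] ADual X} (hA : IsPositiveOp A) {x : X}
    (hx : x ≠ 0) : 0 < RCLike.re ⟪(rieszJL X ∘L A) x, x⟫ := by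
  simpa [rieszJ_inner] using (hA x hx).1

lemma glsmFunctional_rieszJL_comp (A : X →L[ℂ] ADual X) (ℓ : ADual X) (α : ℝ) (x : X) :
    glsmFunctional (rieszJL X ∘L A) (rieszJ ℓ) α x =
      α * (dpair x (A x)).re + ‖rieszJ (A x - ℓ)‖ ^ 2 := by
  simp only [glsmFunctional, ContinuousLinearMap.comp_apply, ← rieszJL_apply, ← map_sub]
  rw [rieszJL_apply, rieszJ_inner, RCLike.re_to_complex]

end Riesz

namespace HilbertBasis
variable {ι 𝕜 E : Type*} [RCLike 𝕜] [NormedAddCommGroup E] [InnerProductSpace 𝕜 E]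

lemma summable_smul_of_norm_le (b : HilbertBasis ι 𝕜 E) {c : ι → 𝕜} {C : ℝ} (y : E)
    (hc : ∀ i, ‖c i‖ ≤ C * ‖inner 𝕜 (b i) y‖) : Summable fun i => c i • b i := by
  have hmem : Memℓp c 2 :=
    ((lp.memℓp (b.repr y)).norm.const_mul C).mono fun i => by
      simpa [b.repr_apply_apply] using hc i
  exact (b.hasSum_repr_symm ⟨c, hmem⟩).summable

lemma exists_hasSum_and_smul_add_apply_eq [CompleteSpace E] (b : HilbertBasis ι 𝕜 E)
    {T : E →L[𝕜] E} {μ : ι → ℝ} (hμ : ∀ i, 0 ≤ μ i) (hTb : ∀ i, T (b i) = (μ i : 𝕜) • b i)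
    {α : ℝ} (hα : 0 < α) (y : E) :
    ∃ x, HasSum (fun i => (((α + μ i)⁻¹ : ℝ) * inner 𝕜 (b i) y) • b i) x ∧
      (α : 𝕜) • x + T x = y := by
  have hαμ : ∀ i, 0 < α + μ i := fun i => by linarith [hμ i]
  obtain ⟨x, hx⟩ := b.summable_smul_of_norm_le (C := α⁻¹)
      (c := fun i => ((α + μ i)⁻¹ : ℝ) * inner 𝕜 (b i) y) y fun i => by
    rw [norm_mul, RCLike.norm_ofReal, abs_inv, abs_of_pos (hαμ i)]
    gcongr
    linarith [hμ i]
  refine ⟨x, hx, (((hx.const_smul (α : 𝕜)).add (T.hasSum hx)).congr_fun ?_).unique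
    (by simpa [b.repr_apply_apply] using b.hasSum_repr y)⟩
  intro i
  simp only [map_smul, hTb, smul_smul, ← add_smul]
  congr 1
  have hne : ((α + μ i : ℝ) : 𝕜) ≠ 0 := RCLike.ofReal_ne_zero.mpr (hαμ i).ne'
  push_cast at hne ⊢
  field_simp

end HilbertBasis

theorem glsm_unique_minimizer_general
    {X : Type*} [NormedAddCommGroup X] [InnerProductSpace ℂ X] [CompleteSpace X]
    (A : X →L[ℂ] ADual X) (hpos : IsPositiveOp A)
    (lam : ℕ → ℝ) (e : ℕ → X) (l : ℕ → ADual X)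
    (hspec : SpectralData A lam e l)
    (ℓ : ADual X) (α : ℝ) (hα : 0 < α) :
    ∃ xm : X,
      HasSum
        (fun n => (((lam n / (α * lam n + lam n ^ 2) : ℝ) : ℂ) *
          starRingEnd ℂ (dpair (e n) ℓ)) • e n) xm ∧
      (∀ x : X,
        α * (dpair xm (A xm)).re + ‖rieszJ (A xm - ℓ)‖ ^ 2 ≤
          α * (dpair x (A x)).re + ‖rieszJ (A x - ℓ)‖ ^ 2) ∧
      (∀ y : X,
        (∀ x : X,
          α * (dpair y (A y)).re + ‖rieszJ (A y - ℓ)‖ ^ 2 ≤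
            α * (dpair x (A x)).re + ‖rieszJ (A x - ℓ)‖ ^ 2) → y = xm) := by
  let b : HilbertBasis ℕ ℂ X := .mk hspec.orthonormal hspec.complete.ge
  have hb : ⇑b = e := HilbertBasis.coe_mk _ _
  obtain ⟨xm, hsum, hxm⟩ := b.exists_hasSum_and_smul_add_apply_eq (T := rieszJL X ∘L A)
    (fun n => (hspec.pos n).le) (by simpa [hb] using hspec.eig) hα (rieszJ ℓ)
  rw [hb] at hsum
  refine ⟨xm, ?_, fun x => ?_, fun y hy => ?_⟩
  · convert hsum using 4 with n
    · have hlam := hspec.pos n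
      have hcoef : lam n / (α * lam n + lam n ^ 2) = (α + lam n)⁻¹ := by field_simp
      rw [hcoef]
      rfl
    · rw [conj_dpair, inner_rieszJ]
  · simpa only [glsmFunctional_rieszJL_comp] using glsmFunctional_le hpos.isPositive hα.le hxm x
  · simp only [← glsmFunctional_rieszJL_comp] at hy
    exact eq_of_glsmFunctional_le hpos.isPositive.isSymmetric (fun _ => hpos.re_inner_pos)
      hα.le hxm (hy xm)

/-- For `α > 0` the GLSM functional
`J_α(ℓ; x) = α⟨x, Ax⟩ + ‖Ax − ℓ‖²_{X*}` has a unique minimizer over `X`, given by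
`x_α = Σ_n (λ_n/(αλ_n + λ_n²)) conj(⟨x_n, ℓ⟩) x_n`. -/
theorem glsm_unique_minimizer
    {X : Type*} [NormedAddCommGroup X] [InnerProductSpace ℂ X] [CompleteSpace X]
    [SeparableSpace X]
    (A : X →L[ℂ] ADual X) (hpos : IsPositiveOp A) (hcpt : IsCompactOperator ⇑A)
    (lam : ℕ → ℝ) (e : ℕ → X) (l : ℕ → ADual X)
    (hspec : SpectralData A lam e l)
    (ℓ : ADual X) (α : ℝ) (hα : 0 < α) :
    ∃ xm : X,
      HasSum
        (fun n => (((lam n / (α * lam n + lam n ^ 2) : ℝ) : ℂ) *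
          starRingEnd ℂ (dpair (e n) ℓ)) • e n) xm ∧
      (∀ x : X,
        α * (dpair xm (A xm)).re + ‖rieszJ (A xm - ℓ)‖ ^ 2 ≤
          α * (dpair x (A x)).re + ‖rieszJ (A x - ℓ)‖ ^ 2) ∧
      (∀ y : X,
        (∀ x : X,
          α * (dpair y (A y)).re + ‖rieszJ (A y - ℓ)‖ ^ 2 ≤
            α * (dpair x (A x)).re + ‖rieszJ (A x - ℓ)‖ ^ 2) → y = xm) :=
  glsm_unique_minimizer_general A hpos lam e l hspec ℓ α hα
end
end
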